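/- arXiv:2104.13367 — 2 statements merged into one kernel-verified Lean document; each statement's English description precedes it below -/
import Mathlib

section
/- The Mills ratio of the standard normal distribution, z ↦ (1 - Φ(z))/φ(z), where Φ is the standard normal CDF and φ its density, is strictly monotonically decreasing on the real line. -/
open MeasureTheory Real Set

/-- Standard normal density. -/
noncomputable def stdGaussianPDF (z : ℝ) : ℝ :=
  (Real.sqrt (2 * Real.pi))⁻¹ * Real.exp (-(z ^ 2) / 2)

/-- Standard normal CDF. -/
noncomputable def stdGaussianCDF (z : ℝ) : ℝ :=
  ∫ t in Set.Iic z, stdGaussianPDF t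

lemma sqrt2pi_pos : 0 < Real.sqrt (2 * Real.pi) :=
  Real.sqrt_pos.2 (by positivity)

lemma pdf_pos (z : ℝ) : 0 < stdGaussianPDF z := by
  unfold stdGaussianPDF; positivity

lemma pdf_eq (z : ℝ) :
    stdGaussianPDF z = (Real.sqrt (2 * Real.pi))⁻¹ * Real.exp (-(1/2) * z ^ 2) := by
  unfold stdGaussianPDF; ring_nf

lemma pdf_integrable : Integrable stdGaussianPDF := by
  have h := (integrable_exp_neg_mul_sq (by norm_num : (0:ℝ) < 1/2)).const_mul
    (Real.sqrt (2 * Real.pi))⁻¹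
  refine h.congr ?_
  filter_upwards with x
  rw [pdf_eq]

lemma pdf_integral_one : ∫ t, stdGaussianPDF t = 1 := by
  have h := integral_gaussian (1/2 : ℝ)
  simp only [pdf_eq]
  rw [MeasureTheory.integral_const_mul, h]
  rw [show (Real.pi / (1/2)) = 2 * Real.pi by ring]
  exact inv_mul_cancel₀ sqrt2pi_pos.ne'

lemma tail_eq (z : ℝ) : 1 - stdGaussianCDF z = ∫ t in Set.Ioi z, stdGaussianPDF t := by
  have := intervalIntegral.integral_Iic_add_Ioi (b := z) pdf_integrable.integrableOn pdf_integrable.integrableOn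
  rw [pdf_integral_one] at this
  unfold stdGaussianCDF
  linarith

lemma g_integrable (z : ℝ) : Integrable (fun s : ℝ => Real.exp (-(s ^ 2) / 2 - z * s)) := by
  have h := ((integrable_exp_neg_mul_sq (by norm_num : (0:ℝ) < 1/2)).comp_add_right z).const_mul
    (Real.exp (z ^ 2 / 2))
  refine h.congr ?_
  filter_upwards with s
  rw [← Real.exp_add]
  ring_nf

lemma mills_eq (z : ℝ) :
    (1 - stdGaussianCDF z) / stdGaussianPDF z
      = ∫ s in Set.Ioi (0:ℝ), Real.exp (-(s ^ 2) / 2 - z * s) := by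
  rw [tail_eq]
  have htrans : (∫ t in Set.Ioi z, stdGaussianPDF t)
      = ∫ s in Set.Ioi (0:ℝ), stdGaussianPDF (s + z) := by
    have := (measurePreserving_add_right (volume : Measure ℝ) z).setIntegral_preimage_emb
      (measurableEmbedding_addRight z) stdGaussianPDF (Set.Ioi z)
    rw [← this]
    congr 1
    ext s
    simp [Set.mem_Ioi]
  rw [htrans, ← MeasureTheory.integral_div]
  refine setIntegral_congr_fun measurableSet_Ioi (fun s _ => ?_)
  unfold stdGaussianPDF
  rw [mul_div_mul_left _ _ (inv_ne_zero sqrt2pi_pos.ne'), ← Real.exp_sub]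
  ring_nf

/-- The Mills ratio of the standard normal distribution is strictly decreasing. -/
theorem mills_ratio_strictAnti :
    StrictAnti (fun z : ℝ => (1 - stdGaussianCDF z) / stdGaussianPDF z) := by
  intro a b hab
  simp only [mills_eq]
  have hsub : 0 < ∫ s in Set.Ioi (0:ℝ),
      (Real.exp (-(s ^ 2) / 2 - a * s) - Real.exp (-(s ^ 2) / 2 - b * s)) := by
    rw [setIntegral_pos_iff_support_of_nonneg_ae]
    · have hsub : Set.Ioi (0:ℝ) ⊆ Function.support
          (fun s => Real.exp (-(s ^ 2) / 2 - a * s) - Real.exp (-(s ^ 2) / 2 - b * s)) := by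
        intro s hs
        have hs' : (0:ℝ) < s := hs
        have : Real.exp (-(s ^ 2) / 2 - b * s) < Real.exp (-(s ^ 2) / 2 - a * s) := by
          apply Real.exp_lt_exp.2; nlinarith
        simp only [Function.mem_support]
        intro h
        linarith [sub_eq_zero.1 h]
      rw [Set.inter_eq_self_of_subset_right hsub, Real.volume_Ioi]
      exact ENNReal.zero_lt_top
    · rw [Filter.EventuallyLE, ae_restrict_iff' measurableSet_Ioi]
      filter_upwards with s hs
      have hs' : (0:ℝ) < s := hs
      simp only [Pi.zero_apply, sub_nonneg]
      apply Real.exp_le_exp.2; nlinarith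
    · exact ((g_integrable a).sub (g_integrable b)).integrableOn
  rw [MeasureTheory.integral_sub (g_integrable a).integrableOn
    (g_integrable b).integrableOn] at hsub
  linarith
end

section
/- Fix κ ≥ 1. For each J ≥ κ let p*_J ∈ (0,1) be defined by the equation ∑_{k=κ}^{J} C(J,k)·(p*_J)^k = α, where α ∈ (0,1) is a constant and C(J,k) denotes the binomial coefficient. Then p*_J ≍ 1/J as J → ∞; that is, there exist constants 0 < c₁ ≤ c₂ < ∞ and J₀ such that c₁/J ≤ p*_J ≤ c₂/J for all J ≥ J₀. -/
/-!
Write `x = p*_J`. For the lower bound, the equation's left side is part of the binomial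
expansion of `(1 + x)^J - 1`, so `1 + α ≤ (1 + x)^J ≤ exp (J x)`, i.e. `J x ≥ log (1 + α)`.
For the upper bound, the single term `k = κ` already gives `C(J, κ) x^κ ≤ α`, and
`C(J, κ) ≥ (J/2)^κ / κ!` once `J ≥ 2κ`, so `J x ≤ 2 (κ! α)^(1/κ)`.
-/

open Finset Nat

lemma one_add_sum_Icc_choose_mul_pow_le_one_add_pow {κ n : ℕ} (hκ : 1 ≤ κ) {x : ℝ}
    (hx : 0 ≤ x) : 1 + ∑ k ∈ Icc κ n, (n.choose k : ℝ) * x ^ k ≤ (1 + x) ^ n := by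
  have hzero : 0 ∉ Icc κ n := by simp only [mem_Icc]; omega
  have hsub : insert 0 (Icc κ n) ⊆ range (n + 1) := by
    intro k hk
    simp only [mem_insert, mem_Icc, mem_range] at hk ⊢
    omega
  calc 1 + ∑ k ∈ Icc κ n, (n.choose k : ℝ) * x ^ k
      = ∑ k ∈ insert 0 (Icc κ n), (n.choose k : ℝ) * x ^ k := by
        rw [sum_insert hzero]; simp
    _ ≤ ∑ k ∈ range (n + 1), (n.choose k : ℝ) * x ^ k :=
        sum_le_sum_of_subset_of_nonneg hsub fun _ _ _ => by positivity
    _ = (1 + x) ^ n := by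
        rw [add_comm (1 : ℝ) x, add_pow]
        simp [mul_comm]

lemma one_add_pow_le_exp_mul {x : ℝ} (hx : -1 ≤ x) (n : ℕ) : (1 + x) ^ n ≤ Real.exp (n * x) := by
  rw [Real.exp_nat_mul]
  exact pow_le_pow_left₀ (by linarith) (by linarith [Real.add_one_le_exp x]) n

lemma div_two_pow_le_factorial_mul_choose {n κ : ℕ} (h : 2 * κ ≤ n) :
    ((n : ℝ) / 2) ^ κ ≤ κ ! * n.choose κ := by
  have hdesc : ((n + 1 - κ : ℕ) : ℝ) ^ κ ≤ κ ! * n.choose κ := by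
    exact_mod_cast (Nat.descFactorial_eq_factorial_mul_choose n κ) ▸
      Nat.pow_sub_le_descFactorial n κ
  refine le_trans (pow_le_pow_left₀ (by positivity) ?_ κ) hdesc
  rw [Nat.cast_sub (by omega), Nat.cast_add, Nat.cast_one]
  have : 2 * (κ : ℝ) ≤ n := by exact_mod_cast h
  linarith

lemma mul_le_of_choose_mul_pow_le {n κ : ℕ} (hκ : 1 ≤ κ) (h : 2 * κ ≤ n) {x α : ℝ}
    (hx : 0 ≤ x) (hα : (n.choose κ : ℝ) * x ^ κ ≤ α) :
    n * x ≤ 2 * (κ ! * α) ^ (κ : ℝ)⁻¹ := by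
  have hκR : (0 : ℝ) < κ := by exact_mod_cast hκ
  have hpow : (n * x / 2) ^ κ ≤ κ ! * α :=
    calc (n * x / 2) ^ κ = ((n : ℝ) / 2) ^ κ * x ^ κ := by rw [← mul_pow]; ring
      _ ≤ (κ ! * n.choose κ) * x ^ κ := by
          gcongr; exact div_two_pow_le_factorial_mul_choose h
      _ ≤ κ ! * α := by rw [mul_assoc]; gcongr
  have hroot : n * x / 2 ≤ (κ ! * α) ^ (κ : ℝ)⁻¹ := by
    rw [Real.le_rpow_inv_iff_of_pos (by positivity) (le_trans (by positivity) hpow) hκR,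
      Real.rpow_natCast]
    exact hpow
  linarith

theorem pstar_asymp_one_over_J_general (κ : ℕ) (hκ : 1 ≤ κ) (α : ℝ) (hα0 : 0 < α)
    (p : ℕ → ℝ)
    (hp : ∀ J, κ ≤ J → 0 < p J ∧ p J < 1)
    (heq : ∀ J, κ ≤ J → ∑ k ∈ Finset.Icc κ J, (J.choose k : ℝ) * p J ^ k = α) :
    ∃ c₁ c₂ : ℝ, 0 < c₁ ∧ c₁ ≤ c₂ ∧ ∃ J₀ : ℕ,
      ∀ J, J₀ ≤ J → c₁ / J ≤ p J ∧ p J ≤ c₂ / J := by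
  refine ⟨Real.log (1 + α), max (Real.log (1 + α)) (2 * (κ ! * α) ^ (κ : ℝ)⁻¹),
    Real.log_pos (by linarith), le_max_left _ _, 2 * κ, fun J hJ => ?_⟩
  have hκJ : κ ≤ J := by omega
  have hJpos : (0 : ℝ) < J := by exact_mod_cast (show 0 < J by omega)
  have hpJ : 0 ≤ p J := (hp J hκJ).1.le
  constructor
  · have hexp : 1 + α ≤ Real.exp (J * p J) := by
      calc 1 + α ≤ (1 + p J) ^ J := by
            rw [← heq J hκJ]; exact one_add_sum_Icc_choose_mul_pow_le_one_add_pow hκ hpJ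
        _ ≤ Real.exp (J * p J) := one_add_pow_le_exp_mul (by linarith) J
    rw [div_le_iff₀ hJpos, mul_comm]
    exact (Real.log_le_iff_le_exp (by linarith)).2 hexp
  · have hterm : (J.choose κ : ℝ) * p J ^ κ ≤ α := by
      rw [← heq J hκJ]
      exact single_le_sum (f := fun k => (J.choose k : ℝ) * p J ^ k)
        (fun _ _ => by positivity) (by simp [hκJ])
    rw [le_div_iff₀ hJpos, mul_comm]
    exact (mul_le_of_choose_mul_pow_le hκ hJ hpJ hterm).trans (le_max_right _ _)

/-- If `p*_J ∈ (0,1)` solves `∑_{k=κ}^{J} C(J,k) (p*_J)^k = α` with `α ∈ (0,1)` fixed,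
then `p*_J ≍ 1/J` as `J → ∞`. -/
theorem pstar_asymp_one_over_J (κ : ℕ) (hκ : 1 ≤ κ) (α : ℝ) (hα0 : 0 < α) (hα1 : α < 1)
    (p : ℕ → ℝ)
    (hp : ∀ J, κ ≤ J → 0 < p J ∧ p J < 1)
    (heq : ∀ J, κ ≤ J → ∑ k ∈ Finset.Icc κ J, (J.choose k : ℝ) * p J ^ k = α) :
    ∃ c₁ c₂ : ℝ, 0 < c₁ ∧ c₁ ≤ c₂ ∧ ∃ J₀ : ℕ,
      ∀ J, J₀ ≤ J → c₁ / J ≤ p J ∧ p J ≤ c₂ / J :=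
  pstar_asymp_one_over_J_general κ hκ α hα0 p hp heq
end
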